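/- arXiv:math/0509114 — 4 statements merged into one kernel-verified Lean document; each statement's English description precedes it below -/
import Mathlib

section
/- If x, y, z are real numbers with x, y, z ∈ [−2,2] and κ(x,y,z) = x² + y² + z² − xyz − 2 ≤ −2, then (x,y,z) = (0,0,0). -/
theorem kappa_le_neg_two_only_origin (x y z : ℝ)
    (hx : x ∈ Set.Icc (-2 : ℝ) 2) (hy : y ∈ Set.Icc (-2 : ℝ) 2)
    (hz : z ∈ Set.Icc (-2 : ℝ) 2)
    (h : x ^ 2 + y ^ 2 + z ^ 2 - x * y * z - 2 ≤ -2) :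
    (x, y, z) = (0, 0, 0) := by
  obtain ⟨hx1, hx2⟩ := hx
  obtain ⟨hy1, hy2⟩ := hy
  obtain ⟨hz1, hz2⟩ := hz
  have hx0 : x = 0 := by nlinarith [sq_nonneg (y - z), sq_nonneg (y + z), sq_nonneg x, sq_nonneg (x*y - z), sq_nonneg (x*y + z)]
  have hy0 : y = 0 := by nlinarith [sq_nonneg (y - z), sq_nonneg (y + z)]
  have hz0 : z = 0 := by
    rw [hx0, hy0] at h
    have h2 : z ^ 2 ≤ 0 := by nlinarith
    exact pow_eq_zero_iff (by norm_num) |>.mp (le_antisymm h2 (sq_nonneg z))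
  simp [hx0, hy0, hz0]
end

section
/- If x, y, z are real numbers all lying in (−∞,−2], then κ(x,y,z) = x² + y² + z² − xyz − 2 ≥ 18, with equality iff x = y = z = −2. -/
theorem kappa_ge_eighteen_on_three_holed_region (x y z : ℝ)
    (hx : x ≤ -2) (hy : y ≤ -2) (hz : z ≤ -2) :
    18 ≤ x ^ 2 + y ^ 2 + z ^ 2 - x * y * z - 2 ∧
      (x ^ 2 + y ^ 2 + z ^ 2 - x * y * z - 2 = 18 ↔ x = -2 ∧ y = -2 ∧ z = -2) := by
  have hu : 0 ≤ -x - 2 := by linarith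
  have hv : 0 ≤ -y - 2 := by linarith
  have hw : 0 ≤ -z - 2 := by linarith
  have key : x ^ 2 + y ^ 2 + z ^ 2 - x * y * z - 2 - 18 =
      (-x-2)^2 + (-y-2)^2 + (-z-2)^2 + (-x-2)*(-y-2)*(-z-2)
      + 2*((-x-2)*(-y-2) + (-x-2)*(-z-2) + (-y-2)*(-z-2))
      + 8*((-x-2)+(-y-2)+(-z-2)) := by ring
  constructor
  · nlinarith [mul_nonneg (mul_nonneg hu hv) hw, mul_nonneg hu hv, mul_nonneg hu hw, mul_nonneg hv hw, sq_nonneg (-x-2), sq_nonneg (-y-2), sq_nonneg (-z-2)]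
  · constructor
    · intro h
      refine ⟨?_, ?_, ?_⟩ <;>
        nlinarith [mul_nonneg (mul_nonneg hu hv) hw, mul_nonneg hu hv, mul_nonneg hu hw, mul_nonneg hv hw, sq_nonneg (-x-2), sq_nonneg (-y-2), sq_nonneg (-z-2)]
    · rintro ⟨rfl, rfl, rfl⟩; norm_num
end

section
/- The bracket on polynomials in x, y, z determined by {x,y} = 2z − xy, {y,z} = 2x − yz, {z,x} = 2y − zx (extended by bilinearity, antisymmetry, and the Leibniz rule) satisfies the Jacobi identity {x,{y,z}} + {y,{z,x}} + {z,{x,y}} = 0. -/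
open MvPolynomial

/-- The Poisson bracket on `ℝ[x,y,z]` determined by `{x,y} = 2z − xy`,
`{y,z} = 2x − yz`, `{z,x} = 2y − zx`, extended by the Leibniz rule (here realized
through partial derivatives, which automatically gives bilinearity, antisymmetry
and Leibniz). -/
noncomputable def charVarBracket (f g : MvPolynomial (Fin 3) ℝ) : MvPolynomial (Fin 3) ℝ :=
  (2 * X 0 - X 1 * X 2) * (pderiv 1 f * pderiv 2 g - pderiv 2 f * pderiv 1 g) +
  (2 * X 1 - X 2 * X 0) * (pderiv 2 f * pderiv 0 g - pderiv 0 f * pderiv 2 g) +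
  (2 * X 2 - X 0 * X 1) * (pderiv 0 f * pderiv 1 g - pderiv 1 f * pderiv 0 g)

lemma pderiv_two (i : Fin 3) : pderiv i (2 : MvPolynomial (Fin 3) ℝ) = 0 := by
  rw [show (2 : MvPolynomial (Fin 3) ℝ) = C 2 by simp [map_ofNat], pderiv_C]

/-- The bracket satisfies the Jacobi identity on the generators `x, y, z`. -/
theorem charVarBracket_jacobi :
    charVarBracket (X 0) (charVarBracket (X 1) (X 2)) +
      charVarBracket (X 1) (charVarBracket (X 2) (X 0)) +
      charVarBracket (X 2) (charVarBracket (X 0) (X 1)) = 0 := by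
  simp only [charVarBracket, pderiv_X, map_add, map_sub, map_mul, map_ofNat, Derivation.leibniz, pderiv_C, pderiv_two, smul_eq_mul, Pi.single_apply]
  norm_num [Fin.ext_iff]
  ring
end

section
/- Let A, B, C, D ∈ SL(2,C) with ABCD = I, and set a = tr A, b = tr B, c = tr C, d = tr D, x = tr(AB), y = tr(BC), z = tr(CA). Then x² + y² + z² + xyz = (ab + cd)x + (bc + ad)y + (ca + bd)z + (4 − a² − b² − c² − d² − abcd). -/
/-- The defining equation of the relative SL(2,ℂ)-character variety of the
four-holed sphere: if `ABCD = I` then with `a,b,c,d` the boundary traces and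
`x,y,z` the traces of `AB, BC, CA`,
`x² + y² + z² + xyz = (ab+cd)x + (bc+ad)y + (ca+bd)z + (4 − a² − b² − c² − d² − abcd)`. -/
theorem four_holed_sphere_character_relation
    (A B C D : Matrix.SpecialLinearGroup (Fin 2) ℂ) (h : A * B * C * D = 1) :
    letI tr : Matrix.SpecialLinearGroup (Fin 2) ℂ → ℂ :=
      fun M => Matrix.trace (M : Matrix (Fin 2) (Fin 2) ℂ)
    tr (A * B) ^ 2 + tr (B * C) ^ 2 + tr (C * A) ^ 2 +
        tr (A * B) * tr (B * C) * tr (C * A) =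
      (tr A * tr B + tr C * tr D) * tr (A * B) +
        (tr B * tr C + tr A * tr D) * tr (B * C) +
        (tr C * tr A + tr B * tr D) * tr (C * A) +
        (4 - tr A ^ 2 - tr B ^ 2 - tr C ^ 2 - tr D ^ 2 -
          tr A * tr B * tr C * tr D) := by
  have hD : (A * B * C)⁻¹ = D := inv_eq_of_mul_eq_one_right h
  have htrD : Matrix.trace (D : Matrix (Fin 2) (Fin 2) ℂ) =
      Matrix.trace ((A * B * C : Matrix.SpecialLinearGroup (Fin 2) ℂ) : Matrix (Fin 2) (Fin 2) ℂ) := by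
    rw [← hD, Matrix.SpecialLinearGroup.coe_inv, Matrix.adjugate_fin_two,
      Matrix.trace_fin_two]
    simp [Matrix.trace_fin_two]
    ring
  have hA : (A : Matrix (Fin 2) (Fin 2) ℂ) 0 0 * (A : Matrix (Fin 2) (Fin 2) ℂ) 1 1 -
      (A : Matrix (Fin 2) (Fin 2) ℂ) 0 1 * (A : Matrix (Fin 2) (Fin 2) ℂ) 1 0 = 1 := by
    have := A.2; rwa [Matrix.det_fin_two] at this
  have hB : (B : Matrix (Fin 2) (Fin 2) ℂ) 0 0 * (B : Matrix (Fin 2) (Fin 2) ℂ) 1 1 -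
      (B : Matrix (Fin 2) (Fin 2) ℂ) 0 1 * (B : Matrix (Fin 2) (Fin 2) ℂ) 1 0 = 1 := by
    have := B.2; rwa [Matrix.det_fin_two] at this
  have hC : (C : Matrix (Fin 2) (Fin 2) ℂ) 0 0 * (C : Matrix (Fin 2) (Fin 2) ℂ) 1 1 -
      (C : Matrix (Fin 2) (Fin 2) ℂ) 0 1 * (C : Matrix (Fin 2) (Fin 2) ℂ) 1 0 = 1 := by
    have := C.2; rwa [Matrix.det_fin_two] at this
  simp only [Matrix.SpecialLinearGroup.coe_mul, htrD, Matrix.trace_fin_two,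
    Matrix.mul_apply, Fin.sum_univ_two]
  linear_combination
    ((2) + (-1)*(C : Matrix (Fin 2) (Fin 2) ℂ) 1 1 ^ 2 + (-1)*(C : Matrix (Fin 2) (Fin 2) ℂ) 0 0 ^ 2 + (-1)*(B : Matrix (Fin 2) (Fin 2) ℂ) 1 1 ^ 2 + (B : Matrix (Fin 2) (Fin 2) ℂ) 1 1 ^ 2*(C : Matrix (Fin 2) (Fin 2) ℂ) 0 0*(C : Matrix (Fin 2) (Fin 2) ℂ) 1 1 + (-1)*(B : Matrix (Fin 2) (Fin 2) ℂ) 1 0*(B : Matrix (Fin 2) (Fin 2) ℂ) 1 1*(C : Matrix (Fin 2) (Fin 2) ℂ) 0 1*(C : Matrix (Fin 2) (Fin 2) ℂ) 1 1 + (B : Matrix (Fin 2) (Fin 2) ℂ) 1 0*(B : Matrix (Fin 2) (Fin 2) ℂ) 1 1*(C : Matrix (Fin 2) (Fin 2) ℂ) 0 0*(C : Matrix (Fin 2) (Fin 2) ℂ) 0 1 + (-1)*(B : Matrix (Fin 2) (Fin 2) ℂ) 1 0 ^ 2*(C : Matrix (Fin 2) (Fin 2) ℂ) 0 1 ^ 2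 + (-1)*(B : Matrix (Fin 2) (Fin 2) ℂ) 0 1*(B : Matrix (Fin 2) (Fin 2) ℂ) 1 1*(C : Matrix (Fin 2) (Fin 2) ℂ) 1 0*(C : Matrix (Fin 2) (Fin 2) ℂ) 1 1 + (B : Matrix (Fin 2) (Fin 2) ℂ) 0 1*(B : Matrix (Fin 2) (Fin 2) ℂ) 1 1*(C : Matrix (Fin 2) (Fin 2) ℂ) 0 0*(C : Matrix (Fin 2) (Fin 2) ℂ) 1 0 + (-1)*(B : Matrix (Fin 2) (Fin 2) ℂ) 0 1 ^ 2*(C : Matrix (Fin 2) (Fin 2) ℂ) 1 0 ^ 2 + (B : Matrix (Fin 2) (Fin 2) ℂ) 0 0*(B : Matrix (Fin 2) (Fin 2) ℂ) 1 1*(C : Matrix (Fin 2) (Fin 2) ℂ) 1 1 ^ 2 + (-2)*(B : Matrix (Fin 2) (Fin 2) ℂ) 0 0*(B : Matrix (Fin 2) (Fin 2) ℂ) 1 1*(C : Matrix (Fin 2) (Fin 2) ℂ) 0 0*(C : Matrix (Fin 2) (Fin 2) ℂ) 1 1 + (B : Matrix (Fin 2) (Fin 2) ℂ) 0 0*(B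 : Matrix (Fin 2) (Fin 2) ℂ) 1 1*(C : Matrix (Fin 2) (Fin 2) ℂ) 0 0 ^ 2 + (B : Matrix (Fin 2) (Fin 2) ℂ) 0 0*(B : Matrix (Fin 2) (Fin 2) ℂ) 1 0*(C : Matrix (Fin 2) (Fin 2) ℂ) 0 1*(C : Matrix (Fin 2) (Fin 2) ℂ) 1 1 + (-1)*(B : Matrix (Fin 2) (Fin 2) ℂ) 0 0*(B : Matrix (Fin 2) (Fin 2) ℂ) 1 0*(C : Matrix (Fin 2) (Fin 2) ℂ) 0 0*(C : Matrix (Fin 2) (Fin 2) ℂ) 0 1 + (B : Matrix (Fin 2) (Fin 2) ℂ) 0 0*(B : Matrix (Fin 2) (Fin 2) ℂ) 0 1*(C : Matrix (Fin 2) (Fin 2) ℂ) 1 0*(C : Matrix (Fin 2) (Fin 2) ℂ) 1 1 + (-1)*(B : Matrix (Fin 2) (Fin 2) ℂ) 0 0*(B : Matrix (Fin 2) (Fin 2) ℂ) 0 1*(C : Matrix (Fin 2) (Fin 2) ℂ) 0 0*(C : Matrix (Fin 2) (Fin 2) ℂ) 1 0 + (-1)*(B : Matrix (Fin 2) (Fin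 2) ℂ) 0 0 ^ 2 + (B : Matrix (Fin 2) (Fin 2) ℂ) 0 0 ^ 2*(C : Matrix (Fin 2) (Fin 2) ℂ) 0 0*(C : Matrix (Fin 2) (Fin 2) ℂ) 1 1) * hA +
    ((2) + (-2)*(C : Matrix (Fin 2) (Fin 2) ℂ) 0 0*(C : Matrix (Fin 2) (Fin 2) ℂ) 1 1 + (-1)*(A : Matrix (Fin 2) (Fin 2) ℂ) 1 1 ^ 2 + (A : Matrix (Fin 2) (Fin 2) ℂ) 1 1 ^ 2*(C : Matrix (Fin 2) (Fin 2) ℂ) 0 0*(C : Matrix (Fin 2) (Fin 2) ℂ) 1 1 + (-1)*(A : Matrix (Fin 2) (Fin 2) ℂ) 1 0*(A : Matrix (Fin 2) (Fin 2) ℂ) 1 1*(C : Matrix (Fin 2) (Fin 2) ℂ) 0 1*(C : Matrix (Fin 2) (Fin 2) ℂ) 1 1 + (A : Matrix (Fin 2) (Fin 2) ℂ) 1 0*(A : Matrix (Fin 2) (Fin 2) ℂ) 1 1*(C : Matrix (Fin 2) (Fin 2) ℂ) 0 0*(C : Matrix (Fin 2) (Fin 2) ℂ) 0 1 + (-1)*(A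 : Matrix (Fin 2) (Fin 2) ℂ) 1 0 ^ 2*(C : Matrix (Fin 2) (Fin 2) ℂ) 0 1 ^ 2 + (-1)*(A : Matrix (Fin 2) (Fin 2) ℂ) 0 1*(A : Matrix (Fin 2) (Fin 2) ℂ) 1 1*(C : Matrix (Fin 2) (Fin 2) ℂ) 1 0*(C : Matrix (Fin 2) (Fin 2) ℂ) 1 1 + (A : Matrix (Fin 2) (Fin 2) ℂ) 0 1*(A : Matrix (Fin 2) (Fin 2) ℂ) 1 1*(C : Matrix (Fin 2) (Fin 2) ℂ) 0 0*(C : Matrix (Fin 2) (Fin 2) ℂ) 1 0 + (A : Matrix (Fin 2) (Fin 2) ℂ) 0 1*(A : Matrix (Fin 2) (Fin 2) ℂ) 1 0*(C : Matrix (Fin 2) (Fin 2) ℂ) 1 1 ^ 2 + (-2)*(A : Matrix (Fin 2) (Fin 2) ℂ) 0 1*(A : Matrix (Fin 2) (Fin 2) ℂ) 1 0*(C : Matrix (Fin 2) (Fin 2) ℂ) 0 0*(C : Matrix (Fin 2) (Fin 2) ℂ) 1 1 + (A : Matrix (Fin 2) (Fin 2) ℂ) 0 1*(A : Matrix (Fin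 2) (Fin 2) ℂ) 1 0*(C : Matrix (Fin 2) (Fin 2) ℂ) 0 0 ^ 2 + (-1)*(A : Matrix (Fin 2) (Fin 2) ℂ) 0 1 ^ 2*(C : Matrix (Fin 2) (Fin 2) ℂ) 1 0 ^ 2 + (A : Matrix (Fin 2) (Fin 2) ℂ) 0 0*(A : Matrix (Fin 2) (Fin 2) ℂ) 1 0*(C : Matrix (Fin 2) (Fin 2) ℂ) 0 1*(C : Matrix (Fin 2) (Fin 2) ℂ) 1 1 + (-1)*(A : Matrix (Fin 2) (Fin 2) ℂ) 0 0*(A : Matrix (Fin 2) (Fin 2) ℂ) 1 0*(C : Matrix (Fin 2) (Fin 2) ℂ) 0 0*(C : Matrix (Fin 2) (Fin 2) ℂ) 0 1 + (A : Matrix (Fin 2) (Fin 2) ℂ) 0 0*(A : Matrix (Fin 2) (Fin 2) ℂ) 0 1*(C : Matrix (Fin 2) (Fin 2) ℂ) 1 0*(C : Matrix (Fin 2) (Fin 2) ℂ) 1 1 + (-1)*(A : Matrix (Fin 2) (Fin 2) ℂ) 0 0*(A : Matrix (Fin 2) (Fin 2) ℂ) 0 1*(C : Matrix (Fin 2) (Fin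 2) ℂ) 0 0*(C : Matrix (Fin 2) (Fin 2) ℂ) 1 0 + (-1)*(A : Matrix (Fin 2) (Fin 2) ℂ) 0 0 ^ 2 + (A : Matrix (Fin 2) (Fin 2) ℂ) 0 0 ^ 2*(C : Matrix (Fin 2) (Fin 2) ℂ) 0 0*(C : Matrix (Fin 2) (Fin 2) ℂ) 1 1) * hB +
    ((-2)*(B : Matrix (Fin 2) (Fin 2) ℂ) 0 1*(B : Matrix (Fin 2) (Fin 2) ℂ) 1 0 + (A : Matrix (Fin 2) (Fin 2) ℂ) 1 1 ^ 2*(B : Matrix (Fin 2) (Fin 2) ℂ) 0 1*(B : Matrix (Fin 2) (Fin 2) ℂ) 1 0 + (-1)*(A : Matrix (Fin 2) (Fin 2) ℂ) 1 0*(A : Matrix (Fin 2) (Fin 2) ℂ) 1 1*(B : Matrix (Fin 2) (Fin 2) ℂ) 0 1*(B : Matrix (Fin 2) (Fin 2) ℂ) 1 1 + (A : Matrix (Fin 2) (Fin 2) ℂ) 1 0*(A : Matrix (Fin 2) (Fin 2) ℂ) 1 1*(B : Matrix (Fin 2) (Fin 2) ℂ) 0 0*(B : Matrix (Fin 2) (Fin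 2) ℂ) 0 1 + (-1)*(A : Matrix (Fin 2) (Fin 2) ℂ) 1 0 ^ 2*(B : Matrix (Fin 2) (Fin 2) ℂ) 0 1 ^ 2 + (-1)*(A : Matrix (Fin 2) (Fin 2) ℂ) 0 1*(A : Matrix (Fin 2) (Fin 2) ℂ) 1 1*(B : Matrix (Fin 2) (Fin 2) ℂ) 1 0*(B : Matrix (Fin 2) (Fin 2) ℂ) 1 1 + (A : Matrix (Fin 2) (Fin 2) ℂ) 0 1*(A : Matrix (Fin 2) (Fin 2) ℂ) 1 1*(B : Matrix (Fin 2) (Fin 2) ℂ) 0 0*(B : Matrix (Fin 2) (Fin 2) ℂ) 1 0 + (-2)*(A : Matrix (Fin 2) (Fin 2) ℂ) 0 1*(A : Matrix (Fin 2) (Fin 2) ℂ) 1 0 + (A : Matrix (Fin 2) (Fin 2) ℂ) 0 1*(A : Matrix (Fin 2) (Fin 2) ℂ) 1 0*(B : Matrix (Fin 2) (Fin 2) ℂ) 1 1 ^ 2 + (-2)*(A : Matrix (Fin 2) (Fin 2) ℂ) 0 1*(A : Matrix (Fin 2) (Fin 2) ℂ) 1 0*(B : Matrix (Fin 2) (Fin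 2) ℂ) 0 1*(B : Matrix (Fin 2) (Fin 2) ℂ) 1 0 + (A : Matrix (Fin 2) (Fin 2) ℂ) 0 1*(A : Matrix (Fin 2) (Fin 2) ℂ) 1 0*(B : Matrix (Fin 2) (Fin 2) ℂ) 0 0 ^ 2 + (-1)*(A : Matrix (Fin 2) (Fin 2) ℂ) 0 1 ^ 2*(B : Matrix (Fin 2) (Fin 2) ℂ) 1 0 ^ 2 + (A : Matrix (Fin 2) (Fin 2) ℂ) 0 0*(A : Matrix (Fin 2) (Fin 2) ℂ) 1 0*(B : Matrix (Fin 2) (Fin 2) ℂ) 0 1*(B : Matrix (Fin 2) (Fin 2) ℂ) 1 1 + (-1)*(A : Matrix (Fin 2) (Fin 2) ℂ) 0 0*(A : Matrix (Fin 2) (Fin 2) ℂ) 1 0*(B : Matrix (Fin 2) (Fin 2) ℂ) 0 0*(B : Matrix (Fin 2) (Fin 2) ℂ) 0 1 + (A : Matrix (Fin 2) (Fin 2) ℂ) 0 0*(A : Matrix (Fin 2) (Fin 2) ℂ) 0 1*(B : Matrix (Fin 2) (Fin 2) ℂ) 1 0*(B : Matrix (Fin 2) (Fin 2) ℂ) 1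 1 + (-1)*(A : Matrix (Fin 2) (Fin 2) ℂ) 0 0*(A : Matrix (Fin 2) (Fin 2) ℂ) 0 1*(B : Matrix (Fin 2) (Fin 2) ℂ) 0 0*(B : Matrix (Fin 2) (Fin 2) ℂ) 1 0 + (A : Matrix (Fin 2) (Fin 2) ℂ) 0 0 ^ 2*(B : Matrix (Fin 2) (Fin 2) ℂ) 0 1*(B : Matrix (Fin 2) (Fin 2) ℂ) 1 0) * hC
end
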